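/- Let ⊢ be a logic whose language comprises constant symbols only, with constants {c_i : i < α}. Then ⊢ has an algebraic semantics if and only if one of the following holds: (i) ∅ ⊢ x or ∅ ⊢ c_i for some i; (ii) x ⊢ c_i and x ⊢ c_j for some i ≠ j; (iii) x ⊢ c_k for some k, and c_i ⊣⊢ c_j for some i ≠ j. -/

import Mathlib

/-- An algebraic signature: a type of operation symbols with arities. -/
structure Sig : Type 1 where
  Op : Type
  ar : Op → ℕ

/-- Formulas (terms) over a signature, with variables indexed by ℕ. -/
inductive Fm (L : Sig) : Type where
  | var : ℕ → Fm L
  | op : (f : L.Op) → (Fin (L.ar f) → Fm L) → Fm L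

/-- An algebra for the signature `L`. -/
structure Alg (L : Sig) : Type 1 where
  carrier : Type
  interp : (f : L.Op) → (Fin (L.ar f) → carrier) → carrier

/-- Evaluation of a formula in an algebra under a valuation of the variables. -/
def Fm.eval {L : Sig} (A : Alg L) (v : ℕ → A.carrier) : Fm L → A.carrier
  | .var n => v n
  | .op f as => A.interp f (fun i => (as i).eval A v)

/-- Substitution (endomorphism of the formula algebra). -/
def Fm.subst {L : Sig} (σ : ℕ → Fm L) : Fm L → Fm L
  | .var n => σ n
  | .op f as => .op f (fun i => (as i).subst σ)

/-- The set of variables occurring in a formula. -/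
def Fm.vars {L : Sig} : Fm L → Set ℕ
  | .var n => {n}
  | .op _ as => ⋃ i, (as i).vars

/-- Substitute the formula `ψ` for the variable `v` in `φ`. -/
def Fm.subst1 {L : Sig} (v : ℕ) (ψ : Fm L) (φ : Fm L) : Fm L :=
  φ.subst (fun n => if n = v then ψ else .var n)

/-- A logic: a substitution-invariant (finitary or not) consequence relation on formulas. -/
structure Logic (L : Sig) : Type where
  deriv : Set (Fm L) → Fm L → Prop
  axm : ∀ Γ φ, φ ∈ Γ → deriv Γ φ
  mono : ∀ Γ Δ φ, Γ ⊆ Δ → deriv Γ φ → deriv Δ φ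
  cut : ∀ Γ Δ φ, deriv Γ φ → (∀ γ ∈ Γ, deriv Δ γ) → deriv Δ φ
  substInv : ∀ (σ : ℕ → Fm L) Γ φ, deriv Γ φ → deriv (Fm.subst σ '' Γ) (φ.subst σ)

/-- A logical matrix: an algebra with a set of designated elements. -/
structure LMatrix (L : Sig) : Type 1 where
  alg : Alg L
  F : Set alg.carrier

/-- The consequence relation induced by a class of matrices. -/
def inducedBy {L : Sig} (M : Set (LMatrix L)) (Γ : Set (Fm L)) (φ : Fm L) : Prop :=
  ∀ m ∈ M, ∀ v : ℕ → m.alg.carrier,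
    (∀ γ ∈ Γ, γ.eval m.alg v ∈ m.F) → φ.eval m.alg v ∈ m.F

/-- `M` is a matrix semantics for the logic `ℒ`. -/
def IsMatrixSemantics {L : Sig} (ℒ : Logic L) (M : Set (LMatrix L)) : Prop :=
  ∀ Γ φ, ℒ.deriv Γ φ ↔ inducedBy M Γ φ

/-- Equational consequence relative to a class of algebras (equations as pairs of formulas). -/
def eqConseq {L : Sig} (K : Set (Alg L)) (Θ : Set (Fm L × Fm L)) (e : Fm L × Fm L) : Prop :=
  ∀ A ∈ K, ∀ v : ℕ → A.carrier,
    (∀ p ∈ Θ, p.1.eval A v = p.2.eval A v) → e.1.eval A v = e.2.eval A v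

/-- `τ(φ)`: the result of substituting `φ` for the variable `x` (= variable 0) in each
equation of `τ`. -/
def tauApp {L : Sig} (τ : Set (Fm L × Fm L)) (φ : Fm L) : Set (Fm L × Fm L) :=
  (fun e => (Fm.subst1 0 φ e.1, Fm.subst1 0 φ e.2)) '' τ

/-- `τ[Γ]`. -/
def tauAppSet {L : Sig} (τ : Set (Fm L × Fm L)) (Γ : Set (Fm L)) : Set (Fm L × Fm L) :=
  ⋃ γ ∈ Γ, tauApp τ γ

/-- `τ` is a set of equations in the single variable `x` (= variable 0). -/
def IsUnivalent {L : Sig} (τ : Set (Fm L × Fm L)) : Prop :=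
  ∀ e ∈ τ, e.1.vars ⊆ ({0} : Set ℕ) ∧ e.2.vars ⊆ ({0} : Set ℕ)

/-- `K` is a `τ`-algebraic semantics for `ℒ`: `Γ ⊢ φ` iff `τ[Γ] ⊨_K τ(φ)`. -/
def IsTauAlgSem {L : Sig} (ℒ : Logic L) (τ : Set (Fm L × Fm L)) (K : Set (Alg L)) : Prop :=
  IsUnivalent τ ∧ ∀ Γ φ, ℒ.deriv Γ φ ↔ ∀ e ∈ tauApp τ φ, eqConseq K (tauAppSet τ Γ) e

/-- `ℒ` has an algebraic semantics (admits an equational completeness theorem). -/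
def HasAlgSem {L : Sig} (ℒ : Logic L) : Prop :=
  ∃ (τ : Set (Fm L × Fm L)) (K : Set (Alg L)), IsTauAlgSem ℒ τ K

/-- `θ` is a congruence of the algebra `A`. -/
def IsCong {L : Sig} (A : Alg L) (θ : A.carrier → A.carrier → Prop) : Prop :=
  Equivalence θ ∧ ∀ (f : L.Op) (as bs : Fin (L.ar f) → A.carrier),
    (∀ i, θ (as i) (bs i)) → θ (A.interp f as) (A.interp f bs)

/-- The congruence of `A` generated by `X` (least congruence containing `X`). -/
def congGen {L : Sig} (A : Alg L) (X : Set (A.carrier × A.carrier))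
    (a c : A.carrier) : Prop :=
  ∀ θ, IsCong A θ → (∀ p ∈ X, θ p.1 p.2) → θ a c

/-- `p` is a unary polynomial function of `A`: `p(a) = φ^A(a, c⃗)` for a formula `φ(x, y⃗)`
and parameters `c⃗` from `A`. -/
def IsUnaryPoly {L : Sig} (A : Alg L) (p : A.carrier → A.carrier) : Prop :=
  ∃ (φ : Fm L) (c : ℕ → A.carrier),
    ∀ a, p a = φ.eval A (fun n => if n = 0 then a else c n)

/-- Compatibility of a relation with a set. -/
def Compatible {L : Sig} (A : Alg L) (θ : A.carrier → A.carrier → Prop)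
    (F : Set A.carrier) : Prop :=
  ∀ a c, θ a c → a ∈ F → c ∈ F

/-- The Leibniz congruence `Ω^A F`: the largest congruence of `A` compatible with `F`
(realized as the union of all congruences compatible with `F`). -/
def leibniz {L : Sig} (A : Alg L) (F : Set A.carrier) (a c : A.carrier) : Prop :=
  ∃ θ, IsCong A θ ∧ Compatible A θ F ∧ θ a c

/-- The formula algebra. -/
def FmAlg (L : Sig) : Alg L :=
  ⟨Fm L, fun f as => Fm.op f as⟩

/-- `ℒ` has no theorems. -/
def LacksTheorems {L : Sig} (ℒ : Logic L) : Prop :=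
  ¬ ∃ φ, ℒ.deriv ∅ φ

/-- `ℒ` is assertional. -/
def Assertional {L : Sig} (ℒ : Logic L) : Prop :=
  ∃ (M : Set (LMatrix L)) (φ : Fm L), IsMatrixSemantics ℒ M ∧ φ.vars ⊆ ({0} : Set ℕ) ∧
    ∀ m ∈ M, ∃ c : m.alg.carrier,
      (∀ a : m.alg.carrier, φ.eval m.alg (fun _ => a) = c) ∧ m.F = {c}

/-- `ℒ` is almost assertional. -/
def AlmostAssertional {L : Sig} (ℒ : Logic L) : Prop :=
  LacksTheorems ℒ ∧
  ∃ (M : Set (LMatrix L)) (φ : Fm L), IsMatrixSemantics ℒ M ∧ φ.vars ⊆ ({0} : Set ℕ) ∧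
    ∀ m ∈ M, m.F.Nonempty → ∃ c : m.alg.carrier,
      (∀ a : m.alg.carrier, φ.eval m.alg (fun _ => a) = c) ∧ m.F = {c}

/-- Two formulas are logically equivalent in `ℒ`. -/
def LogEquiv {L : Sig} (ℒ : Logic L) (ε δ : Fm L) : Prop :=
  ∀ (φ : Fm L) (v : ℕ),
    ℒ.deriv {Fm.subst1 v ε φ} (Fm.subst1 v δ φ) ∧
    ℒ.deriv {Fm.subst1 v δ φ} (Fm.subst1 v ε φ)

/-- The constant formula associated with a nullary operation symbol. -/
def constFm {L : Sig} (h : ∀ f : L.Op, L.ar f = 0) (c : L.Op) : Fm L :=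
  Fm.op c (fun i => (Fin.cast (h c) i).elim0)

/-!
An equation in the variable `x` over a signature of constants is `x ≈ x`, `x ≈ c` or `c ≈ c'`,
and a `τ`-algebraic semantics `K` is the same thing as the matrix semantics given by the
matrices `⟨A, {a | A ⊨ τ(a)}⟩`, `A ∈ K`.

A mixed equation `x ≈ c_k` in `τ` forces `x ⊢ c_k`; if moreover `∅ ⊬ c_k`, some equation of
`τ` fails at `c_k`, and it is either `x ≈ c_m` with `m ≠ k`, giving (ii), or `c_i ≈ c_j` with
`i ≠ j`, which forces `c_i ⊣⊢ c_j`, giving (iii). Without mixed equations every filter is empty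
or full, so `x ⊢ φ` for all `φ`, and a refutation of `∅ ⊢ x` exhibits two distinct constants.

Conversely, if `∅ ⊢ x` then everything is derivable and `τ = K = ∅` works. Otherwise take `τ`
to be `{x ≈ c_q}`, `{x ≈ c_i, x ≈ c_j}` or `{x ≈ c_k, c_i ≈ c_j}` according to the case. For every theory `T`, the quotient of the formula algebra collapsing `T`
to one class (and, in case (iii) with `T ≠ ∅`, also merging `c_i` with `c_j`) has `τ`-filter
whose preimage is exactly `T`, so these quotients are equivalent to the Lindenbaum matrices.
-/

namespace Fm

variable {L : Sig}

theorem eval_subst (A : Alg L) (σ : ℕ → Fm L) (v : ℕ → A.carrier) (φ : Fm L) :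
    (φ.subst σ).eval A v = φ.eval A (fun n => (σ n).eval A v) := by
  induction φ with
  | var n => rfl
  | op f as ih => exact congrArg (A.interp f) (funext ih)

theorem eval_congr (A : Alg L) {v w : ℕ → A.carrier} {φ : Fm L}
    (hvw : ∀ n ∈ φ.vars, v n = w n) : φ.eval A v = φ.eval A w := by
  induction φ with
  | var n => exact hvw n rfl
  | op f as ih =>
    exact congrArg (A.interp f) (funext fun i =>
      ih i fun n hn => hvw n (Set.mem_iUnion.2 ⟨i, hn⟩))

theorem eval_fmAlg (σ : ℕ → Fm L) (φ : Fm L) : φ.eval (FmAlg L) σ = φ.subst σ := by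
  induction φ with
  | var n => rfl
  | op f as ih => exact congrArg (Fm.op f) (funext ih)

theorem subst_var (φ : Fm L) : φ.subst Fm.var = φ := by
  induction φ with
  | var n => rfl
  | op f as ih => exact congrArg (Fm.op f) (funext ih)

theorem eval_subst1_zero (A : Alg L) (v : ℕ → A.carrier) (φ : Fm L) {ψ : Fm L}
    (hψ : ψ.vars ⊆ {0}) : (Fm.subst1 0 φ ψ).eval A v = ψ.eval A (fun _ => φ.eval A v) := by
  rw [subst1, eval_subst]
  refine eval_congr A fun n hn => ?_
  rw [hψ hn, if_pos rfl]

end Fm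

def Alg.IsHom {L : Sig} (A B : Alg L) (π : A.carrier → B.carrier) : Prop :=
  ∀ f as, π (A.interp f as) = B.interp f (π ∘ as)

theorem Alg.IsHom.map_eval {L : Sig} {A B : Alg L} {π : A.carrier → B.carrier}
    (hπ : A.IsHom B π) (v : ℕ → A.carrier) (φ : Fm L) :
    π (φ.eval A v) = φ.eval B (π ∘ v) := by
  induction φ with
  | var n => rfl
  | op f as ih => exact (hπ f _).trans (congrArg (B.interp f) (funext ih))

section Matrices

variable {L : Sig}

theorem inducedBy_iff_forall_singleton {M : Set (LMatrix L)} {Γ : Set (Fm L)} {φ : Fm L} :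
    inducedBy M Γ φ ↔ ∀ m ∈ M, inducedBy {m} Γ φ := by
  simp [inducedBy]

theorem inducedBy_fmAlg_singleton_iff {T Γ : Set (Fm L)} {φ : Fm L} :
    inducedBy {⟨FmAlg L, T⟩} Γ φ ↔
      ∀ σ : ℕ → Fm L, (∀ γ ∈ Γ, γ.subst σ ∈ T) → φ.subst σ ∈ T := by
  simp only [inducedBy, Set.mem_singleton_iff, forall_eq]
  show (∀ σ : ℕ → Fm L, (∀ γ ∈ Γ, γ.eval (FmAlg L) σ ∈ T) → φ.eval (FmAlg L) σ ∈ T) ↔ _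
  simp only [Fm.eval_fmAlg]
  rfl

theorem inducedBy_singleton_iff_of_isHom {m n : LMatrix L} {π : m.alg.carrier → n.alg.carrier}
    (hπ : m.alg.IsHom n.alg π) (hsurj : Function.Surjective π) (hF : m.F = π ⁻¹' n.F)
    {Γ : Set (Fm L)} {φ : Fm L} : inducedBy {m} Γ φ ↔ inducedBy {n} Γ φ := by
  simp only [inducedBy, Set.mem_singleton_iff, forall_eq, hF, Set.mem_preimage, hπ.map_eval]
  refine ⟨fun H w hw => ?_, fun H v hv => H _ hv⟩
  obtain ⟨v, rfl⟩ := hsurj.comp_left w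
  exact H v hw

theorem IsMatrixSemantics.of_equiv {ℒ : Logic L} {M N : Set (LMatrix L)}
    (hM : IsMatrixSemantics ℒ M)
    (hMN : ∀ m ∈ M, ∃ n ∈ N, ∀ Γ φ, inducedBy {m} Γ φ ↔ inducedBy {n} Γ φ)
    (hNM : ∀ n ∈ N, ∃ m ∈ M, ∀ Γ φ, inducedBy {m} Γ φ ↔ inducedBy {n} Γ φ) :
    IsMatrixSemantics ℒ N := by
  intro Γ φ
  rw [hM, inducedBy_iff_forall_singleton, inducedBy_iff_forall_singleton]
  constructor
  · intro H n hn
    obtain ⟨m, hm, hmn⟩ := hNM n hn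
    exact (hmn Γ φ).1 (H m hm)
  · intro H m hm
    obtain ⟨n, hn, hmn⟩ := hMN m hm
    exact (hmn Γ φ).2 (H n hn)

end Matrices

namespace Logic

variable {L : Sig} (ℒ : Logic L)

def IsTheory (T : Set (Fm L)) : Prop :=
  ∀ φ, ℒ.deriv T φ → φ ∈ T

variable {ℒ} in
theorem IsTheory.mem_of_deriv {T Γ : Set (Fm L)} {φ : Fm L} (hT : ℒ.IsTheory T) (hΓ : Γ ⊆ T)
    (hd : ℒ.deriv Γ φ) : φ ∈ T :=
  hT φ (ℒ.mono Γ T φ hΓ hd)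

theorem isTheory_setOf_deriv (Γ : Set (Fm L)) : ℒ.IsTheory {φ | ℒ.deriv Γ φ} :=
  fun _ hφ => ℒ.cut _ _ _ hφ fun _ hγ => hγ

def lindenbaumMatrices : Set (LMatrix L) :=
  {m | ∃ T, ℒ.IsTheory T ∧ m = ⟨FmAlg L, T⟩}

theorem isMatrixSemantics_lindenbaumMatrices : IsMatrixSemantics ℒ ℒ.lindenbaumMatrices := by
  intro Γ φ
  rw [inducedBy_iff_forall_singleton]
  constructor
  · rintro hd _ ⟨T, hT, rfl⟩
    rw [inducedBy_fmAlg_singleton_iff]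
    exact fun σ hσ =>
      hT.mem_of_deriv (Set.image_subset_iff.2 hσ) (ℒ.substInv σ Γ φ hd)
  · intro hsem
    have hφ := (inducedBy_fmAlg_singleton_iff.1 (hsem _ ⟨_, ℒ.isTheory_setOf_deriv Γ, rfl⟩))
      Fm.var fun γ hγ => by rw [Fm.subst_var]; exact ℒ.axm Γ γ hγ
    rwa [Fm.subst_var] at hφ

variable {ℒ} in
theorem deriv_of_deriv_empty_var (hx : ℒ.deriv ∅ (Fm.var 0)) (Γ : Set (Fm L)) (φ : Fm L) :
    ℒ.deriv Γ φ := by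
  have hφ := ℒ.substInv (fun _ => φ) ∅ _ hx
  rw [Set.image_empty] at hφ
  exact ℒ.mono ∅ Γ φ (Set.empty_subset Γ) hφ

end Logic

section TauSemantics

variable {L : Sig} {ℒ : Logic L} {τ : Set (Fm L × Fm L)} {K : Set (Alg L)}

def tauFilter (τ : Set (Fm L × Fm L)) (A : Alg L) : Set A.carrier :=
  {a | ∀ e ∈ τ, e.1.eval A (fun _ => a) = e.2.eval A (fun _ => a)}

def tauMatrices (τ : Set (Fm L × Fm L)) (K : Set (Alg L)) : Set (LMatrix L) :=
  (fun A => ⟨A, tauFilter τ A⟩) '' K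

theorem inducedBy_tauMatrices {Γ : Set (Fm L)} {φ : Fm L} :
    inducedBy (tauMatrices τ K) Γ φ ↔ ∀ A ∈ K, ∀ v : ℕ → A.carrier,
      (∀ γ ∈ Γ, γ.eval A v ∈ tauFilter τ A) → φ.eval A v ∈ tauFilter τ A :=
  Set.forall_mem_image

theorem forall_tauApp_iff (hτ : IsUnivalent τ) (A : Alg L) (v : ℕ → A.carrier) (φ : Fm L) :
    (∀ e ∈ tauApp τ φ, e.1.eval A v = e.2.eval A v) ↔ φ.eval A v ∈ tauFilter τ A := by
  simp only [tauApp, Set.forall_mem_image]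
  refine forall₂_congr fun e he => ?_
  rw [Fm.eval_subst1_zero A v φ (hτ e he).1, Fm.eval_subst1_zero A v φ (hτ e he).2]

theorem forall_tauAppSet_iff (hτ : IsUnivalent τ) (A : Alg L) (v : ℕ → A.carrier)
    (Γ : Set (Fm L)) :
    (∀ e ∈ tauAppSet τ Γ, e.1.eval A v = e.2.eval A v) ↔
      ∀ γ ∈ Γ, γ.eval A v ∈ tauFilter τ A := by
  simp only [tauAppSet, Set.mem_iUnion, forall_exists_index]
  exact ⟨fun H γ hγ => (forall_tauApp_iff hτ A v γ).1 fun e he => H e γ hγ he,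
    fun H e γ hγ he => (forall_tauApp_iff hτ A v γ).2 (H γ hγ) e he⟩

theorem isTauAlgSem_iff (hτ : IsUnivalent τ) :
    IsTauAlgSem ℒ τ K ↔ IsMatrixSemantics ℒ (tauMatrices τ K) := by
  refine (and_iff_right hτ).trans (forall₂_congr fun Γ φ => iff_congr Iff.rfl ?_)
  simp only [inducedBy_tauMatrices, eqConseq, forall_tauAppSet_iff hτ, ← forall_tauApp_iff hτ]
  exact ⟨fun H A hA v hv e he => H e he A hA v hv, fun H e he A hA v hv => H A hA v hv e he⟩

theorem deriv_var_of_mem_tau (hsem : IsMatrixSemantics ℒ (tauMatrices τ K))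
    (hτ : IsUnivalent τ) {ψ : Fm L} (hψ : (Fm.var 0, ψ) ∈ τ ∨ (ψ, Fm.var 0) ∈ τ) :
    ℒ.deriv {Fm.var 0} ψ := by
  rw [hsem, inducedBy_tauMatrices]
  intro A _ v hv
  have hx : v 0 ∈ tauFilter τ A := hv _ rfl
  have hψ0 : ψ.vars ⊆ {0} := hψ.elim (fun he => (hτ _ he).2) fun he => (hτ _ he).1
  have hψx : ψ.eval A v = v 0 := by
    rw [Fm.eval_congr A (w := fun _ => v 0) fun n hn => by rw [hψ0 hn]]
    rcases hψ with he | he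
    · exact (hx _ he).symm
    · exact hx _ he
  rwa [hψx]

theorem deriv_of_mem_tau_of_vars_eq_empty (hsem : IsMatrixSemantics ℒ (tauMatrices τ K))
    {s t : Fm L} (hst : (s, t) ∈ τ ∨ (t, s) ∈ τ) (hs : s.vars = ∅) (ht : t.vars = ∅) :
    ℒ.deriv {s} t := by
  rw [hsem, inducedBy_tauMatrices]
  intro A _ v hv
  have hsF : s.eval A v ∈ tauFilter τ A := hv _ rfl
  have hclosed {χ : Fm L} (hχ : χ.vars = ∅) : χ.eval A v = χ.eval A (fun _ => s.eval A v) :=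
    Fm.eval_congr A (by simp [hχ])
  have hts : t.eval A v = s.eval A v := by
    rw [hclosed hs, hclosed ht]
    rcases hst with he | he
    · exact (hsF _ he).symm
    · exact hsF _ he
  rwa [hts]

theorem exists_mem_tau_eval_ne_of_not_deriv_empty
    (hsem : IsMatrixSemantics ℒ (tauMatrices τ K)) {φ : Fm L} (hφ : ¬ ℒ.deriv ∅ φ) :
    ∃ A ∈ K, ∃ v : ℕ → A.carrier, ∃ s t, (s, t) ∈ τ ∧
      s.eval A (fun _ => φ.eval A v) ≠ t.eval A (fun _ => φ.eval A v) := by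
  rw [hsem, inducedBy_tauMatrices] at hφ
  push Not at hφ
  obtain ⟨A, hA, v, -, hv⟩ := hφ
  simp only [tauFilter, Set.mem_ofPred_eq, not_forall, Prod.exists] at hv
  obtain ⟨s, t, he, hne⟩ := hv
  exact ⟨A, hA, v, s, t, he, hne⟩

theorem hasAlgSem_of_deriv_empty_var (hx : ℒ.deriv ∅ (Fm.var 0)) : HasAlgSem ℒ :=
  ⟨∅, ∅, fun _ he => he.elim, fun Γ φ =>
    iff_of_true (ℒ.deriv_of_deriv_empty_var hx Γ φ) fun _ ⟨_, he, _⟩ => he.elim⟩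

end TauSemantics

section Quotients

variable {L : Sig}

noncomputable def quotAlg (s : Setoid (Fm L)) : Alg L :=
  ⟨Quotient s, fun f as => Quotient.mk s (Fm.op f fun i => (as i).out)⟩

theorem isHom_quotAlg_mk {s : Setoid (Fm L)} (hs : IsCong (FmAlg L) s) :
    (FmAlg L).IsHom (quotAlg s) (Quotient.mk s) :=
  fun f as => Quotient.sound (hs.2 f _ _ fun i => s.symm (Quotient.mk_out (as i)))

theorem mk_mem_tauFilter_quotAlg_iff {τ : Set (Fm L × Fm L)} {s : Setoid (Fm L)}
    (hs : IsCong (FmAlg L) s) (ψ : Fm L) :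
    Quotient.mk s ψ ∈ tauFilter τ (quotAlg s) ↔
      ∀ e ∈ τ, s (e.1.subst fun _ => ψ) (e.2.subst fun _ => ψ) := by
  refine forall₂_congr fun e _ => ?_
  have heval (χ : Fm L) : χ.eval (quotAlg s) (fun _ => Quotient.mk s ψ) =
      Quotient.mk s (χ.subst fun _ => ψ) := by
    rw [← Fm.eval_fmAlg]
    exact ((isHom_quotAlg_mk hs).map_eval _ χ).symm
  rw [heval, heval]
  exact Quotient.eq

theorem hasAlgSem_of_forall_isTheory {ℒ : Logic L} {τ : Set (Fm L × Fm L)} (hτ : IsUnivalent τ)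
    (H : ∀ T, ℒ.IsTheory T → ∃ s : Setoid (Fm L), IsCong (FmAlg L) s ∧
      ∀ ψ, (∀ e ∈ τ, s (e.1.subst fun _ => ψ) (e.2.subst fun _ => ψ)) ↔ ψ ∈ T) :
    HasAlgSem ℒ := by
  let K : Set (Alg L) := {A | ∃ s : Setoid (Fm L), IsCong (FmAlg L) s ∧ ∃ T, ℒ.IsTheory T ∧
    (∀ ψ, (∀ e ∈ τ, s (e.1.subst fun _ => ψ) (e.2.subst fun _ => ψ)) ↔ ψ ∈ T) ∧ A = quotAlg s}
  have hequiv {s : Setoid (Fm L)} (hs : IsCong (FmAlg L) s) {T : Set (Fm L)}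
      (hsT : ∀ ψ, (∀ e ∈ τ, s (e.1.subst fun _ => ψ) (e.2.subst fun _ => ψ)) ↔ ψ ∈ T)
      (Γ : Set (Fm L)) (φ : Fm L) :
      inducedBy {⟨FmAlg L, T⟩} Γ φ ↔ inducedBy {⟨quotAlg s, tauFilter τ (quotAlg s)⟩} Γ φ :=
    inducedBy_singleton_iff_of_isHom (isHom_quotAlg_mk hs) Quotient.mk_surjective
      (Set.ext fun ψ => ((mk_mem_tauFilter_quotAlg_iff hs ψ).trans (hsT ψ)).symm)
  refine ⟨τ, K, (isTauAlgSem_iff hτ).2 (ℒ.isMatrixSemantics_lindenbaumMatrices.of_equiv ?_ ?_)⟩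
  · rintro _ ⟨T, hT, rfl⟩
    obtain ⟨s, hs, hsT⟩ := H T hT
    exact ⟨_, ⟨_, ⟨s, hs, T, hT, hsT, rfl⟩, rfl⟩, hequiv hs hsT⟩
  · rintro _ ⟨_, ⟨s, hs, T, hT, hsT, rfl⟩, rfl⟩
    exact ⟨_, ⟨T, hT, rfl⟩, hequiv hs hsT⟩

end Quotients

namespace Set

open Classical in
noncomputable def collapse {α : Type*} (T : Set α) (a : α) : Option α :=
  if a ∈ T then none else some a

variable {α : Type*} {T : Set α} {a b : α}

theorem collapse_of_mem (ha : a ∈ T) : T.collapse a = none := if_pos ha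

theorem collapse_of_notMem (ha : a ∉ T) : T.collapse a = some a := if_neg ha

theorem collapse_eq_none_iff : T.collapse a = none ↔ a ∈ T := by
  by_cases ha : a ∈ T <;> simp [collapse, ha]

theorem collapse_eq_some_iff : T.collapse a = some b ↔ a ∉ T ∧ a = b := by
  by_cases ha : a ∈ T <;> simp [collapse, ha]

end Set

section ConstantsOnly

variable {L : Sig}

theorem args_eq (h : ∀ f : L.Op, L.ar f = 0) {X : Sort*} (f : L.Op)
    (as bs : Fin (L.ar f) → X) : as = bs :=
  funext fun i => (Fin.cast (h f) i).elim0

theorem isCong_of_equivalence (h : ∀ f : L.Op, L.ar f = 0) (A : Alg L)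
    {θ : A.carrier → A.carrier → Prop} (hθ : Equivalence θ) : IsCong A θ :=
  ⟨hθ, fun f as bs _ => args_eq h f as bs ▸ hθ.refl _⟩

variable (h : ∀ f : L.Op, L.ar f = 0)

theorem op_eq_constFm (m : L.Op) (as : Fin (L.ar m) → Fm L) : Fm.op m as = constFm h m :=
  congrArg _ (args_eq h m _ _)

theorem constFm_injective : Function.Injective (constFm h) := fun _ _ e => by
  injection e

theorem vars_constFm (m : L.Op) : (constFm h m).vars = ∅ :=
  Set.iUnion_eq_empty.2 fun i => (Fin.cast (h m) i).elim0

theorem subst_constFm (σ : ℕ → Fm L) (m : L.Op) : (constFm h m).subst σ = constFm h m :=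
  op_eq_constFm h m _

theorem eval_constFm_eq (A : Alg L) (m : L.Op) (v w : ℕ → A.carrier) :
    (constFm h m).eval A v = (constFm h m).eval A w :=
  Fm.eval_congr A (by simp [vars_constFm h])

theorem Fm.eq_var_zero_or_eq_constFm {ψ : Fm L} (hψ : ψ.vars ⊆ {0}) :
    ψ = Fm.var 0 ∨ ∃ m, ψ = constFm h m := by
  cases ψ with
  | var n => exact Or.inl (congrArg Fm.var (hψ rfl))
  | op m as => exact Or.inr ⟨m, op_eq_constFm h m as⟩

theorem Logic.IsTheory.constFm_mem {ℒ : Logic L} {T : Set (Fm L)} (hT : ℒ.IsTheory T)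
    {ψ : Fm L} (hψ : ψ ∈ T) {m : L.Op} (hxm : ℒ.deriv {Fm.var 0} (constFm h m)) :
    constFm h m ∈ T := by
  have hψm := ℒ.substInv (fun _ => ψ) _ _ hxm
  rw [Set.image_singleton, subst_constFm] at hψm
  exact hT.mem_of_deriv (Set.singleton_subset_iff.2 hψ) hψm

end ConstantsOnly

def AlgSemCriterion {L : Sig} (h : ∀ f : L.Op, L.ar f = 0) (ℒ : Logic L) : Prop :=
  (ℒ.deriv ∅ (Fm.var 0) ∨ ∃ i : L.Op, ℒ.deriv ∅ (constFm h i)) ∨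
    (∃ i j : L.Op, i ≠ j ∧
      ℒ.deriv {Fm.var 0} (constFm h i) ∧ ℒ.deriv {Fm.var 0} (constFm h j)) ∨
    (∃ k i j : L.Op, i ≠ j ∧ ℒ.deriv {Fm.var 0} (constFm h k) ∧
      ℒ.deriv {constFm h i} (constFm h j) ∧ ℒ.deriv {constFm h j} (constFm h i))

section Necessity

variable {L : Sig} (h : ∀ f : L.Op, L.ar f = 0) {ℒ : Logic L} {τ : Set (Fm L × Fm L)}
  {K : Set (Alg L)}

theorem mem_tauFilter_of_forall_not_mixed (hτ : IsUnivalent τ)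
    (hmix : ∀ k, (Fm.var 0, constFm h k) ∉ τ ∧ (constFm h k, Fm.var 0) ∉ τ) {A : Alg L}
    {a b : A.carrier} (ha : a ∈ tauFilter τ A) : b ∈ tauFilter τ A := by
  rintro ⟨s, t⟩ he
  obtain ⟨hs, ht⟩ := hτ _ he
  rcases Fm.eq_var_zero_or_eq_constFm h hs with rfl | ⟨i, rfl⟩ <;>
    rcases Fm.eq_var_zero_or_eq_constFm h ht with rfl | ⟨j, rfl⟩
  · rfl
  · exact absurd he (hmix j).1
  · exact absurd he (hmix i).2
  · have hij := ha _ he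
    rwa [eval_constFm_eq h A i _ (fun _ => a), eval_constFm_eq h A j _ (fun _ => a)]

theorem algSemCriterion_of_mixed_mem_tau (hsem : IsMatrixSemantics ℒ (tauMatrices τ K))
    (hτ : IsUnivalent τ) {k : L.Op}
    (hk : (Fm.var 0, constFm h k) ∈ τ ∨ (constFm h k, Fm.var 0) ∈ τ) : AlgSemCriterion h ℒ := by
  have hxk := deriv_var_of_mem_tau hsem hτ hk
  by_cases hk0 : ℒ.deriv ∅ (constFm h k)
  · exact Or.inl (Or.inr ⟨k, hk0⟩)
  obtain ⟨A, -, v, s, t, he, hne⟩ := exists_mem_tau_eval_ne_of_not_deriv_empty hsem hk0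
  obtain ⟨hs, ht⟩ := hτ _ he
  rcases Fm.eq_var_zero_or_eq_constFm h hs with rfl | ⟨i, rfl⟩ <;>
    rcases Fm.eq_var_zero_or_eq_constFm h ht with rfl | ⟨j, rfl⟩
  · exact absurd rfl hne
  · refine Or.inr (Or.inl ⟨k, j, ?_, hxk, deriv_var_of_mem_tau hsem hτ (Or.inl he)⟩)
    rintro rfl
    exact hne (eval_constFm_eq h A k _ _)
  · refine Or.inr (Or.inl ⟨k, i, ?_, hxk, deriv_var_of_mem_tau hsem hτ (Or.inr he)⟩)
    rintro rfl
    exact hne (eval_constFm_eq h A k _ _)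
  · refine Or.inr (Or.inr ⟨k, i, j, ?_, hxk,
      deriv_of_mem_tau_of_vars_eq_empty hsem (Or.inl he) (vars_constFm h i) (vars_constFm h j),
      deriv_of_mem_tau_of_vars_eq_empty hsem (Or.inr he) (vars_constFm h j) (vars_constFm h i)⟩)
    rintro rfl
    exact hne rfl

theorem algSemCriterion_of_forall_not_mixed (hsem : IsMatrixSemantics ℒ (tauMatrices τ K))
    (hτ : IsUnivalent τ)
    (hmix : ∀ k, (Fm.var 0, constFm h k) ∉ τ ∧ (constFm h k, Fm.var 0) ∉ τ) :
    AlgSemCriterion h ℒ := by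
  by_cases hx0 : ℒ.deriv ∅ (Fm.var 0)
  · exact Or.inl (Or.inl hx0)
  have hx (φ : Fm L) : ℒ.deriv {Fm.var 0} φ := by
    rw [hsem, inducedBy_tauMatrices]
    exact fun A _ v hv => mem_tauFilter_of_forall_not_mixed h hτ hmix (hv _ rfl)
  obtain ⟨A, -, v, s, t, he, hne⟩ := exists_mem_tau_eval_ne_of_not_deriv_empty hsem hx0
  obtain ⟨hs, ht⟩ := hτ _ he
  rcases Fm.eq_var_zero_or_eq_constFm h hs with rfl | ⟨i, rfl⟩ <;>
    rcases Fm.eq_var_zero_or_eq_constFm h ht with rfl | ⟨j, rfl⟩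
  · exact absurd rfl hne
  · exact absurd he (hmix j).1
  · exact absurd he (hmix i).2
  · refine Or.inr (Or.inl ⟨i, j, ?_, hx _, hx _⟩)
    rintro rfl
    exact hne rfl

theorem algSemCriterion_of_hasAlgSem (hℒ : HasAlgSem ℒ) : AlgSemCriterion h ℒ := by
  obtain ⟨τ, K, hτ, hderiv⟩ := hℒ
  have hsem := (isTauAlgSem_iff hτ).1 ⟨hτ, hderiv⟩
  by_cases hmix : ∃ k, (Fm.var 0, constFm h k) ∈ τ ∨ (constFm h k, Fm.var 0) ∈ τ
  · obtain ⟨k, hk⟩ := hmix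
    exact algSemCriterion_of_mixed_mem_tau h hsem hτ hk
  · push Not at hmix
    exact algSemCriterion_of_forall_not_mixed h hsem hτ hmix

end Necessity

section Sufficiency

variable {L : Sig} (h : ∀ f : L.Op, L.ar f = 0) {ℒ : Logic L}

theorem hasAlgSem_of_deriv_empty_constFm {q : L.Op} (hq : ℒ.deriv ∅ (constFm h q)) :
    HasAlgSem ℒ := by
  refine hasAlgSem_of_forall_isTheory (τ := {(Fm.var 0, constFm h q)})
    (by simp [IsUnivalent, Fm.vars, vars_constFm h]) fun T hT =>
      ⟨Setoid.ker T.collapse, isCong_of_equivalence h _ (Setoid.ker _).iseqv, fun ψ => ?_⟩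
  have hqT : constFm h q ∈ T := hT.mem_of_deriv (Set.empty_subset T) hq
  simp [Fm.subst, subst_constFm h, Setoid.ker_def, Set.collapse_of_mem hqT,
    Set.collapse_eq_none_iff]

theorem hasAlgSem_of_deriv_var_constFm {i j : L.Op} (hij : i ≠ j)
    (hxi : ℒ.deriv {Fm.var 0} (constFm h i)) (hxj : ℒ.deriv {Fm.var 0} (constFm h j)) :
    HasAlgSem ℒ := by
  refine hasAlgSem_of_forall_isTheory (τ := {(Fm.var 0, constFm h i), (Fm.var 0, constFm h j)})
    (by simp [IsUnivalent, Fm.vars, vars_constFm h]) fun T hT =>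
      ⟨Setoid.ker T.collapse, isCong_of_equivalence h _ (Setoid.ker _).iseqv, fun ψ => ?_⟩
  simp only [Set.mem_insert_iff, Set.mem_singleton_iff, forall_eq_or_imp, forall_eq, Fm.subst,
    subst_constFm h, Setoid.ker_def]
  by_cases hψ : ψ ∈ T
  · simp [Set.collapse_of_mem, hψ, hT.constFm_mem h hψ hxi, hT.constFm_mem h hψ hxj]
  · simp only [hψ, iff_false, Set.collapse_of_notMem hψ]
    rintro ⟨hi, hj⟩
    exact hij (constFm_injective h
      ((Set.collapse_eq_some_iff.1 hi.symm).2.trans (Set.collapse_eq_some_iff.1 hj.symm).2.symm))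

theorem hasAlgSem_of_interderivable_constFm {k i j : L.Op} (hij : i ≠ j)
    (hxk : ℒ.deriv {Fm.var 0} (constFm h k)) (hdij : ℒ.deriv {constFm h i} (constFm h j))
    (hdji : ℒ.deriv {constFm h j} (constFm h i)) : HasAlgSem ℒ := by
  refine hasAlgSem_of_forall_isTheory (τ := {(Fm.var 0, constFm h k), (constFm h i, constFm h j)})
    (by simp [IsUnivalent, Fm.vars, vars_constFm h]) fun T hT => ?_
  rcases T.eq_empty_or_nonempty with rfl | ⟨ψ₀, hψ₀⟩
  · refine ⟨⊥, isCong_of_equivalence h _ (⊥ : Setoid (Fm L)).iseqv, fun ψ => ?_⟩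
    simp [Fm.subst, subst_constFm h, (constFm_injective h).ne hij]
  classical
  -- Merging `c_j` into `c_i` only outside `T` keeps `T` a single class, as `c_i ∈ T ↔ c_j ∈ T`.
  let ρ : Fm L → Fm L := fun ψ => if ψ = constFm h j then constFm h i else ψ
  refine ⟨Setoid.ker (Option.map ρ ∘ T.collapse), isCong_of_equivalence h _ (Setoid.ker _).iseqv,
    fun ψ => ?_⟩
  simp only [Set.mem_insert_iff, Set.mem_singleton_iff, forall_eq_or_imp, forall_eq, Fm.subst,
    subst_constFm h, Setoid.ker_def, Function.comp_apply,
    Set.collapse_of_mem (hT.constFm_mem h hψ₀ hxk), Option.map_none, Option.map_eq_none_iff,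
    Set.collapse_eq_none_iff]
  refine and_iff_left ?_
  by_cases hi : constFm h i ∈ T
  · rw [Set.collapse_of_mem hi, Set.collapse_of_mem (hT.mem_of_deriv (by simpa using hi) hdij)]
  · have hj : constFm h j ∉ T := fun hj => hi (hT.mem_of_deriv (by simpa using hj) hdji)
    simp [Set.collapse_of_notMem hi, Set.collapse_of_notMem hj, ρ, (constFm_injective h).ne hij]

theorem hasAlgSem_of_algSemCriterion (hc : AlgSemCriterion h ℒ) : HasAlgSem ℒ := by
  rcases hc with (hx | ⟨q, hq⟩) | ⟨i, j, hij, hxi, hxj⟩ | ⟨k, i, j, hij, hxk, hdij, hdji⟩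
  · exact hasAlgSem_of_deriv_empty_var hx
  · exact hasAlgSem_of_deriv_empty_constFm h hq
  · exact hasAlgSem_of_deriv_var_constFm h hij hxi hxj
  · exact hasAlgSem_of_interderivable_constFm h hij hxk hdij hdji

end Sufficiency

/-- A logic in a language with constant symbols only has an algebraic semantics iff
(i) `∅ ⊢ x` or `∅ ⊢ cᵢ` for some `i`; or (ii) `x ⊢ cᵢ` and `x ⊢ cⱼ` for some `i ≠ j`; or
(iii) `x ⊢ c_k` for some `k` and `cᵢ ⊣⊢ cⱼ` for some `i ≠ j`. -/
theorem constants_only_alg_sem_iff {L : Sig} (h : ∀ f : L.Op, L.ar f = 0)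
    (ℒ : Logic L) :
    HasAlgSem ℒ ↔
      ((ℒ.deriv ∅ (Fm.var 0) ∨ ∃ i : L.Op, ℒ.deriv ∅ (constFm h i)) ∨
       (∃ i j : L.Op, i ≠ j ∧
          ℒ.deriv {Fm.var 0} (constFm h i) ∧ ℒ.deriv {Fm.var 0} (constFm h j)) ∨
       (∃ k i j : L.Op, i ≠ j ∧ ℒ.deriv {Fm.var 0} (constFm h k) ∧
          ℒ.deriv {constFm h i} (constFm h j) ∧
          ℒ.deriv {constFm h j} (constFm h i))) :=
  ⟨algSemCriterion_of_hasAlgSem h, hasAlgSem_of_algSemCriterion h⟩
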